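/- If u head-reduces to v, then for every finite sequence of λ-terms w₁,…,wₙ there exists a λ-term w such that (u)w₁…wₙ head-reduces to w, (v)w₁…wₙ head-reduces to w, and the length of the head reduction from (u)w₁…wₙ to w equals the length from (v)w₁…wₙ to w plus the length from u to v. -/
import Mathlib

/- Untyped λ-calculus with de Bruijn indices, head reduction, Church numerals. -/

inductive Lam : Type
  | var : ℕ → Lam
  | app : Lam → Lam → Lam
  | lam : Lam → Lam
deriving DecidableEq, Repr

namespace Lam

/-- Shift free variables `≥ c` up by 1. -/
def lift (c : ℕ) : Lam → Lam
  | var n => if n < c then var n else var (n + 1)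
  | app s t => app (s.lift c) (t.lift c)
  | lam t => lam (t.lift (c + 1))

/-- Push a substitution under a binder. -/
def up (σ : ℕ → Lam) : ℕ → Lam
  | 0 => var 0
  | n + 1 => (σ n).lift 0

/-- Capture-avoiding simultaneous substitution. -/
def subst (σ : ℕ → Lam) : Lam → Lam
  | var n => σ n
  | app s t => app (s.subst σ) (t.subst σ)
  | lam t => lam (t.subst (up σ))

/-- `t.subst0 u` is `t[u/0]`, the β-contractum substitution. -/
def subst0 (t u : Lam) : Lam :=
  t.subst (fun n => match n with | 0 => u | n + 1 => var n)

/-- `m` occurs free in the term. -/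
def FreeIn (m : ℕ) : Lam → Prop
  | var n => n = m
  | app s t => s.FreeIn m ∨ t.FreeIn m
  | lam t => t.FreeIn (m + 1)

/-- A closed λ-term. -/
def Closed (t : Lam) : Prop := ∀ m, ¬ t.FreeIn m

end Lam

/-- One-step β-reduction (anywhere in the term). -/
inductive Beta : Lam → Lam → Prop
  | beta (t u) : Beta (.app (.lam t) u) (t.subst0 u)
  | appL {s s'} (t) : Beta s s' → Beta (.app s t) (.app s' t)
  | appR {t t'} (s) : Beta t t' → Beta (.app s t) (.app s t')
  | lam {t t'} : Beta t t' → Beta (.lam t) (.lam t')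

/-- β-equivalence `≃β`. -/
def BetaEq : Lam → Lam → Prop := Relation.EqvGen Beta

/-- A term in (β-)normal form. -/
def NormalForm (t : Lam) : Prop := ∀ u, ¬ Beta t u

/-- One step of head reduction: reduce the head redex. -/
inductive HStep : Lam → Lam → Prop
  | beta (t u) : HStep (.app (.lam t) u) (t.subst0 u)
  | lam {t t'} : HStep t t' → HStep (.lam t) (.lam t')
  | app {t t'} (u) : HStep t t' → (∀ s, t ≠ .lam s) → HStep (.app t u) (.app t' u)

/-- `HRedN k u v` : `u ≻ v` by a head reduction of length `h(u,v) = k`. -/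
inductive HRedN : ℕ → Lam → Lam → Prop
  | refl (t) : HRedN 0 t t
  | step {k t u v} : HStep t u → HRedN k u v → HRedN (k + 1) t v

/-- `u ≻ v` : `v` is obtained from `u` by head reduction. -/
def HRed (t u : Lam) : Prop := ∃ k, HRedN k t u

/-- Head normal form: no head redex. -/
def HeadNormal (t : Lam) : Prop := ∀ u, ¬ HStep t u

/-- Solvable: the head reduction terminates. -/
def Solvable (t : Lam) : Prop := ∃ v, HRed t v ∧ HeadNormal v

/-- `(t)u₁…uₙ` : iterated application. -/
def appList : Lam → List Lam → Lam
  | t, [] => t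
  | t, u :: us => appList (t.app u) us

/-- `(f)ⁿ x` with `x = var 1`, `f = var 0`. -/
def churchBody : ℕ → Lam
  | 0 => .var 1
  | n + 1 => .app (.var 0) (churchBody n)

/-- Church numeral `n̲ = λx λf (f)ⁿ x`. -/
def church (n : ℕ) : Lam := .lam (.lam (churchBody n))

/-- `0̲ = λx λf x`. -/
def czero : Lam := .lam (.lam (.var 1))

/-- `s̲ = λn λx λf (f)((n)x)f`. -/
def csucc : Lam := .lam (.lam (.lam (.app (.var 0) (.app (.app (.var 2) (.var 1)) (.var 0)))))

/-- `(s̲)ⁿ 0̲`. -/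
def succIter : ℕ → Lam
  | 0 => czero
  | n + 1 => .app csucc (succIter n)

/-- `G = λx λy (x) λz (y)(s̲)z`. -/
def Gop : Lam := .lam (.lam (.app (.var 1) (.lam (.app (.var 1) (.app csucc (.var 0))))))

/-- `δ = λf (f)0̲`. -/
def deltaOp : Lam := .lam (.app (.var 0) czero)

/-- `T₁ = λn ((n)δ)G`. -/
def T1 : Lam := .lam (.app (.app (.var 0) deltaOp) Gop)

/-- `F = λx λy (x)(s̲)y`. -/
def Fop : Lam := .lam (.lam (.app (.var 1) (.app csucc (.var 0))))

/-- `T₂ = λn λf (((n)f)F)0̲`. -/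
def T2 : Lam := .lam (.lam (.app (.app (.app (.var 1) (.var 0)) Fop) czero))

/-- `θ₀ = λx λf λz (x)(λd z)(λx x)`. -/
def theta0 : Lam := .lam (.lam (.lam (.app (.app (.var 2) (.lam (.var 1))) (.lam (.var 0)))))

/-- `T` is a storage operator for the integers (the fixed variable `f` is `var 0`). -/
def IsStorage (T : Lam) : Prop :=
  ∀ n : ℕ, ∃ τ : Lam, BetaEq τ (church n) ∧
    ∀ θ : Lam, BetaEq θ (church n) →
      ∃ σ : ℕ → Lam, HRed (.app (.app T θ) (.var 0)) (.app (.var 0) (τ.subst σ))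

namespace Lam

/-- iterate `up` -/
def upn : ℕ → (ℕ → Lam) → (ℕ → Lam)
  | 0, σ => σ
  | n + 1, σ => up (upn n σ)

/-- iterate `lift 0` -/
def lift0n : ℕ → Lam → Lam
  | 0, t => t
  | n + 1, t => (lift0n n t).lift 0

lemma lift0n_var (c m : ℕ) : lift0n c (var m) = var (m + c) := by
  induction c with
  | zero => rfl
  | succ c ih => simp [lift0n, ih, lift]; omega

lemma upn_lt (σ : ℕ → Lam) {c k : ℕ} (h : k < c) : upn c σ k = var k := by
  induction c generalizing k with
  | zero => omega
  | succ c ih =>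
    cases k with
    | zero => rfl
    | succ k =>
      have : k < c := by omega
      simp [upn, up, ih this, lift]

lemma upn_ge (σ : ℕ → Lam) (c k : ℕ) : upn c σ (k + c) = lift0n c (σ k) := by
  induction c with
  | zero => rfl
  | succ c ih =>
    show up (upn c σ) (k + c + 1) = _
    simp only [up, ih, lift0n]

lemma lift_lift (t : Lam) : ∀ c d, c ≤ d → (t.lift c).lift (d + 1) = (t.lift d).lift c := by
  induction t with
  | var n =>
    intro c d h
    by_cases h1 : n < c
    · simp [lift, h1, (by omega : n < d), (by omega : n < d + 1)]
    · by_cases h2 : n < d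
      · simp [lift, h1, h2, (by omega : n + 1 < d + 1)]
      · simp only [lift, if_neg h1, if_neg h2, if_neg (by omega : ¬ n + 1 < d + 1),
          if_neg (by omega : ¬ n + 1 < c)]
  | app s t ihs iht => intro c d h; simp [lift, ihs _ _ h, iht _ _ h]
  | lam t ih => intro c d h; simp [lift, ih (c+1) (d+1) (by omega)]

lemma lift0n_lift (s : Lam) (n : ℕ) : (lift0n n s).lift n = lift0n (n + 1) s := by
  induction n with
  | zero => rfl
  | succ n ih =>
    show ((lift0n n s).lift 0).lift (n + 1) = _
    rw [lift_lift _ 0 n (by omega), ih]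
    rfl

lemma subst_lift (t : Lam) : ∀ n σ, (t.subst (upn n σ)).lift n = (t.lift n).subst (upn (n + 1) σ) := by
  induction t with
  | var m =>
    intro n σ
    by_cases h : m < n
    · simp [subst, lift, upn_lt σ h, h, upn_lt σ (by omega : m < n + 1)]
    · have hm : m = (m - n) + n := by omega
      have hm1 : m + 1 = (m - n) + (n + 1) := by omega
      simp only [subst, lift, if_neg h]
      rw [hm1, upn_ge]
      conv_lhs => rw [hm]
      rw [upn_ge, lift0n_lift]
  | app s t ihs iht => intro n σ; simp [subst, lift, ihs, iht]
  | lam t ih =>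
    intro n σ
    show Lam.lam ((t.subst (up (upn n σ))).lift (n + 1)) = Lam.lam ((t.lift (n+1)).subst (up (upn (n+1) σ)))
    rw [show up (upn n σ) = upn (n+1) σ from rfl, ih (n+1) σ]
    rfl

lemma subst_subst (t : Lam) : ∀ σ τ : ℕ → Lam,
    (t.subst τ).subst σ = t.subst (fun n => (τ n).subst σ) := by
  induction t with
  | var n => intro σ τ; rfl
  | app s t ihs iht => intro σ τ; simp [subst, ihs, iht]
  | lam t ih =>
    intro σ τ
    show Lam.lam ((t.subst (up τ)).subst (up σ)) = Lam.lam (t.subst (up fun n => (τ n).subst σ))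
    rw [ih]
    have he : (up fun n => subst σ (τ n)) = fun n => subst (up σ) (up τ n) := by
      funext n
      cases n with
      | zero => rfl
      | succ n =>
        symm
        show ((up τ) (n+1)).subst (up σ) = ((τ n).subst σ).lift 0
        have := subst_lift (τ n) 0 σ
        simp only [upn] at this
        rw [this]
        rfl
    rw [he]

lemma lift_subst0_erase (t : Lam) (b : Lam) :
    ∀ c, (t.lift c).subst (upn c (fun n => match n with | 0 => b | n + 1 => var n)) = t := by
  set τ : ℕ → Lam := fun n => match n with | 0 => b | n + 1 => var n with hτ
  induction t with
  | var n =>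
    intro c
    by_cases h : n < c
    · simp [lift, h, subst, upn_lt τ h]
    · simp only [lift, if_neg h, subst]
      have hn : n + 1 = (n + 1 - c) + c := by omega
      rw [hn, upn_ge]
      have : n + 1 - c = (n - c) + 1 := by omega
      rw [this]
      show lift0n c (var (n - c)) = var n
      rw [lift0n_var]
      congr 1
      omega
  | app s t ihs iht => intro c; simp [subst, lift, ihs, iht]
  | lam t ih =>
    intro c
    show Lam.lam ((t.lift (c+1)).subst (up (upn c τ))) = Lam.lam t
    rw [show up (upn c τ) = upn (c+1) τ from rfl, ih (c+1)]

lemma subst0_subst (t u : Lam) (σ : ℕ → Lam) :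
    (t.subst (up σ)).subst0 (u.subst σ) = (t.subst0 u).subst σ := by
  unfold subst0
  rw [subst_subst, subst_subst]
  congr 1
  funext n
  cases n with
  | zero => rfl
  | succ n =>
    show ((σ n).lift 0).subst _ = (σ n)
    exact lift_subst0_erase (σ n) (u.subst σ) 0

lemma hstep_subst {t t' : Lam} (h : HStep t t') : ∀ σ, HStep (t.subst σ) (t'.subst σ) := by
  induction h with
  | beta t u =>
    intro σ
    rw [← subst0_subst]
    exact HStep.beta _ _
  | lam h ih =>
    intro σ
    exact HStep.lam (ih (up σ))
  | @app t t' u h hnl ih =>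
    intro σ
    cases t with
    | var n => cases h
    | lam s => exact absurd rfl (hnl s)
    | app a b =>
      exact HStep.app _ (ih σ) (fun s hs => by simp [subst] at hs)

lemma hstep_det {t u v : Lam} (h1 : HStep t u) (h2 : HStep t v) : u = v := by
  induction h1 generalizing v with
  | beta a b =>
    cases h2 with
    | beta => rfl
    | app _ h hnl => exact absurd rfl (hnl _)
  | lam h ih =>
    cases h2 with
    | lam h' => rw [ih h']
  | app u h hnl ih =>
    cases h2 with
    | beta => exact absurd rfl (hnl _)
    | app _ h' _ => rw [ih h']

lemma hredn_trans {a b : ℕ} {t u v : Lam} (h1 : HRedN a t u) (h2 : HRedN b u v) :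
    HRedN (a + b) t v := by
  induction h1 with
  | refl => simpa using h2
  | step s _ ih =>
    rw [Nat.add_right_comm]
    exact HRedN.step s (ih h2)

lemma hredn_join {a b : ℕ} {t x y : Lam} (h1 : HRedN a t x) (h2 : HRedN b t y)
    (hab : a ≤ b) : HRedN (b - a) x y := by
  induction h1 generalizing b with
  | refl => simpa using h2
  | @step k t u x s _ ih =>
    cases h2 with
    | refl => omega
    | step s' h' =>
      rw [hstep_det s s'] at *
      have := ih h' (by omega)
      simpa using this

lemma hredn_cast {a b : ℕ} {t u : Lam} (h : HRedN a t u) (e : a = b) : HRedN b t u := e ▸ h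

end Lam

lemma appList_hstep {a b : Lam} (h : HStep a b) (hnl : ∀ s, a ≠ .lam s) :
    ∀ ws : List Lam, HStep (appList a ws) (appList b ws) := by
  intro ws
  induction ws generalizing a b with
  | nil => exact h
  | cons w rest ih =>
    exact ih (HStep.app w h hnl) (fun s hs => by cases hs)

lemma hstep_appList {u u' : Lam} (h : HStep u u') (ws : List Lam) :
    ∃ (w : Lam) (m : ℕ), HRedN (m + 1) (appList u ws) w ∧ HRedN m (appList u' ws) w := by
  induction ws generalizing u u' with
  | nil => exact ⟨u', 0, HRedN.step h (HRedN.refl _), HRedN.refl _⟩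
  | cons w₀ rest ih =>
    cases u with
    | var n => cases h
    | app a b =>
      have h' : HStep (Lam.app (Lam.app a b) w₀) (Lam.app u' w₀) :=
        HStep.app w₀ h (fun s hs => by cases hs)
      exact ih h'
    | lam t =>
      cases h with
      | lam ht =>
        rename_i t'
        have s1 : HStep (Lam.app (Lam.lam t) w₀) (t.subst0 w₀) := HStep.beta t w₀
        have s2 : HStep (Lam.app (Lam.lam t') w₀) (t'.subst0 w₀) := HStep.beta t' w₀
        have s3 : HStep (t.subst0 w₀) (t'.subst0 w₀) := Lam.hstep_subst ht _
        obtain ⟨w, m, h1, h2⟩ := ih s3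
        refine ⟨w, m + 1, ?_, ?_⟩
        · exact HRedN.step (appList_hstep s1 (fun s hs => by cases hs) rest) h1
        · exact HRedN.step (appList_hstep s2 (fun s hs => by cases hs) rest) h2

/-- If `u ≻ v`, then for every sequence `w̄` there is `w` with `(u)w̄ ≻ w`, `(v)w̄ ≻ w`
and `h((u)w̄, w) = h((v)w̄, w) + h(u, v)`. -/
theorem head_reduction_app {k : ℕ} {u v : Lam} (h : HRedN k u v) (ws : List Lam) :
    ∃ (w : Lam) (m : ℕ), HRedN (m + k) (appList u ws) w ∧ HRedN m (appList v ws) w := by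
  induction h with
  | refl t => exact ⟨appList t ws, 0, HRedN.refl _, HRedN.refl _⟩
  | @step k' t u₀ v s _ ih =>
    obtain ⟨w, m, h1, h2⟩ := ih
    obtain ⟨w₁, m₁, g1, g2⟩ := hstep_appList s ws
    by_cases hc : m₁ ≤ m + k'
    · have hjoin : HRedN (m + k' - m₁) w₁ w := Lam.hredn_join g2 h1 hc
      refine ⟨w, m, ?_, h2⟩
      exact Lam.hredn_cast (Lam.hredn_trans g1 hjoin) (by omega)
    · have hjoin : HRedN (m₁ - (m + k')) w w₁ := Lam.hredn_join h1 g2 (by omega)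
      refine ⟨w₁, m + (m₁ - (m + k')), ?_, ?_⟩
      · exact Lam.hredn_cast g1 (by omega)
      · exact Lam.hredn_trans h2 hjoin
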